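/- arXiv:1804.02591 — 6 statements merged into one kernel-verified Lean document; each statement's English description precedes it below -/
import Mathlib

section
/- Let γ1, γ2 ∈ S² be linearly independent. Then the cycle-consistency region Ω(γ1,γ2) is exactly the set of unit vectors of the form −(λ1γ1 + λ2γ2)/‖λ1γ1 + λ2γ2‖ with λ1, λ2 > 0; equivalently, Ω(γ1,γ2) is the minimizing geodesic arc on S² joining −γ1 and −γ2 with the two endpoints removed. -/
noncomputable section

open scoped RealInnerProductSpace

/-- ℝ³ as a Euclidean space. -/
abbrev V3 : Type := EuclideanSpace ℝ (Fin 3)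

/-- The unit sphere S² in ℝ³. -/
def unitSphere : Set V3 := {v : V3 | ‖v‖ = 1}

/-- γ₁, γ₂, γ₃ are cycle-consistent if λ₁γ₁ + λ₂γ₂ + λ₃γ₃ = 0 for some λ₁, λ₂, λ₃ > 0. -/
def CycleConsistent (γ₁ γ₂ γ₃ : V3) : Prop :=
  ∃ l₁ l₂ l₃ : ℝ, 0 < l₁ ∧ 0 < l₂ ∧ 0 < l₃ ∧ l₁ • γ₁ + l₂ • γ₂ + l₃ • γ₃ = 0

/-- The cycle-consistency region Ω(γ₁,γ₂) = {γ ∈ S² : γ₁, γ₂, γ are cycle-consistent}. -/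
def consistencyRegion (γ₁ γ₂ : V3) : Set V3 :=
  {γ ∈ unitSphere | CycleConsistent γ₁ γ₂ γ}

/-- Great-circle distance d_g(u,v) = arccos⟨u,v⟩ for unit vectors. -/
def dg (u v : V3) : ℝ := Real.arccos ⟪u, v⟫

/-- The AAB inconsistency I_AAB(γ₃; γ₁, γ₂) = inf_{γ ∈ Ω(γ₁,γ₂)} d_g(γ₃, γ). -/
def IAAB (γ₃ γ₁ γ₂ : V3) : ℝ := sInf ((dg γ₃) '' consistencyRegion γ₁ γ₂)

/-!
Dividing a positive relation λ₁γ₁ + λ₂γ₂ + λ₃γ = 0 by λ₃ shows that Ω(γ₁,γ₂) consists of the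
unit vectors in the open cone spanned by −γ₁ and −γ₂, which gives the first description.
By the equality case of the triangle inequality for angles (`angle_eq_angle_add_angle_iff`),
the unit vectors γ with d(−γ₁,γ) + d(γ,−γ₂) = d(−γ₁,−γ₂) are those in the closed cone, as
−γ₁ and −γ₂ are not antipodal; the two boundary rays of the cone meet the sphere only in −γ₁
and −γ₂.
-/

open InnerProductGeometry Real

section

variable {E : Type*} [NormedAddCommGroup E] [InnerProductSpace ℝ E]

lemma angle_eq_arccos_inner_of_norm_eq_one {x y : E} (hx : ‖x‖ = 1) (hy : ‖y‖ = 1) :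
    angle x y = Real.arccos ⟪x, y⟫ := by
  rw [angle, hx, hy, mul_one, div_one]

lemma angle_ne_pi_of_linearIndependent_pair {x z : E} (h : LinearIndependent ℝ ![x, z]) :
    angle x z ≠ π := by
  rw [Ne, angle_eq_pi_iff]
  rintro ⟨-, r, hr, rfl⟩
  exact hr.ne (LinearIndependent.pair_iff.mp h r (-1) (by module)).1

lemma norm_eq_one_and_exists_pos_iff {x z : E} (h : LinearIndependent ℝ ![x, z]) (y : E) :
    (‖y‖ = 1 ∧ ∃ a b : ℝ, 0 < a ∧ 0 < b ∧ y = a • x + b • z) ↔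
      ∃ a b : ℝ, 0 < a ∧ 0 < b ∧ y = ‖a • x + b • z‖⁻¹ • (a • x + b • z) := by
  constructor
  · rintro ⟨hy, a, b, ha, hb, rfl⟩
    exact ⟨a, b, ha, hb, by rw [hy, inv_one, one_smul]⟩
  · rintro ⟨a, b, ha, hb, rfl⟩
    have hne : a • x + b • z ≠ 0 := fun h0 => ha.ne' (LinearIndependent.pair_iff.mp h a b h0).1
    have hpos : 0 < ‖a • x + b • z‖⁻¹ := inv_pos.mpr (norm_pos_iff.mpr hne)
    refine ⟨norm_smul_inv_norm hne, _, _, mul_pos hpos ha, mul_pos hpos hb, ?_⟩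
    rw [smul_add, smul_smul, smul_smul]

lemma angle_add_angle_eq_angle_and_ne_iff {x y z : E} (hx : ‖x‖ = 1) (hy : ‖y‖ = 1)
    (hz : ‖z‖ = 1) (h : LinearIndependent ℝ ![x, z]) :
    (angle x y + angle y z = angle x z ∧ y ≠ x ∧ y ≠ z) ↔
      ∃ a b : ℝ, 0 < a ∧ 0 < b ∧ y = a • x + b • z := by
  rw [eq_comm, angle_eq_angle_add_angle_iff (norm_ne_zero_iff.mp (by simp [hy])),
    or_iff_right (angle_ne_pi_of_linearIndependent_pair h), Submodule.mem_span_pair]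
  constructor
  · rintro ⟨⟨a, b, rfl⟩, hyx, hyz⟩
    simp only [NNReal.smul_def] at hy hyx hyz ⊢
    have ha : (a : ℝ) ≠ 0 := by
      rintro ha
      rw [ha, zero_smul, zero_add, norm_smul, hz, mul_one, NNReal.norm_eq] at hy
      rw [ha, hy, zero_smul, zero_add, one_smul] at hyz
      exact hyz rfl
    have hb : (b : ℝ) ≠ 0 := by
      rintro hb
      rw [hb, zero_smul, add_zero, norm_smul, hx, mul_one, NNReal.norm_eq] at hy
      rw [hb, hy, zero_smul, add_zero, one_smul] at hyx
      exact hyx rfl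
    exact ⟨a, b, a.2.lt_of_ne' ha, b.2.lt_of_ne' hb, rfl⟩
  · rintro ⟨a, b, ha, hb, rfl⟩
    refine ⟨⟨⟨a, ha.le⟩, ⟨b, hb.le⟩, rfl⟩, fun hx' => ?_, fun hz' => ?_⟩
    · exact hb.ne' (LinearIndependent.pair_iff.mp h (a - 1) b
        (by linear_combination (norm := module) hx')).2
    · exact ha.ne' (LinearIndependent.pair_iff.mp h a (b - 1)
        (by linear_combination (norm := module) hz')).1

end

lemma mem_consistencyRegion_iff {γ₁ γ₂ γ : V3} :
    γ ∈ consistencyRegion γ₁ γ₂ ↔ ‖γ‖ = 1 ∧ ∃ a b : ℝ, 0 < a ∧ 0 < b ∧ γ = a • -γ₁ + b • -γ₂ := by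
  refine and_congr_right fun _ => ⟨?_, ?_⟩
  · rintro ⟨l₁, l₂, l₃, h₁, h₂, h₃, heq⟩
    refine ⟨l₁ / l₃, l₂ / l₃, by positivity, by positivity, ?_⟩
    apply smul_right_injective V3 h₃.ne'
    dsimp only
    rw [eq_neg_of_add_eq_zero_right heq]
    match_scalars <;> field_simp
  · rintro ⟨a, b, ha, hb, rfl⟩
    exact ⟨a, b, 1, ha, hb, one_pos, by module⟩

/-- For linearly independent γ₁, γ₂ ∈ S², the cycle-consistency region
Ω(γ₁,γ₂) is exactly the set of unit vectors −(λ₁γ₁+λ₂γ₂)/‖λ₁γ₁+λ₂γ₂‖ with λ₁, λ₂ > 0;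
equivalently, it is the minimizing geodesic arc on S² joining −γ₁ and −γ₂ with the two
endpoints removed. -/
theorem stmt_1 (γ₁ γ₂ : V3) (h₁ : γ₁ ∈ unitSphere) (h₂ : γ₂ ∈ unitSphere)
    (hli : LinearIndependent ℝ ![γ₁, γ₂]) :
    consistencyRegion γ₁ γ₂ =
      {γ : V3 | ∃ l₁ l₂ : ℝ, 0 < l₁ ∧ 0 < l₂ ∧
        γ = -(‖l₁ • γ₁ + l₂ • γ₂‖⁻¹ • (l₁ • γ₁ + l₂ • γ₂))} ∧
    consistencyRegion γ₁ γ₂ =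
      {γ ∈ unitSphere | dg (-γ₁) γ + dg γ (-γ₂) = dg (-γ₁) (-γ₂)} \ {-γ₁, -γ₂} := by
  have hli' : LinearIndependent ℝ ![-γ₁, -γ₂] := by simpa using hli
  constructor
  · ext γ
    rw [mem_consistencyRegion_iff, norm_eq_one_and_exists_pos_iff hli']
    simp only [Set.mem_ofPred_eq, smul_neg, ← neg_add, norm_neg]
  · ext γ
    simp only [Set.mem_sdiff, Set.mem_insert_iff, Set.mem_singleton_iff, not_or,
      unitSphere, Set.mem_ofPred_eq, mem_consistencyRegion_iff, and_assoc]
    refine and_congr_right fun hγ => ?_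
    have hn₁ : ‖-γ₁‖ = 1 := by rw [norm_neg]; exact h₁
    have hn₂ : ‖-γ₂‖ = 1 := by rw [norm_neg]; exact h₂
    rw [← angle_add_angle_eq_angle_and_ne_iff hn₁ hγ hn₂ hli', dg, dg, dg,
      ← angle_eq_arccos_inner_of_norm_eq_one hn₁ hγ, ← angle_eq_arccos_inner_of_norm_eq_one hγ hn₂,
      ← angle_eq_arccos_inner_of_norm_eq_one hn₁ hn₂]
end
end

section
/- Let γ1, γ2, γ3 ∈ S² with γ1, γ2 linearly independent, set x = ⟨γ1,γ3⟩, y = ⟨γ2,γ3⟩, z = ⟨γ1,γ2⟩, and let γp be the orthogonal projection of γ3 onto span{γ1,γ2}. If γp ≠ 0, then γp/‖γp‖ belongs to Ω(γ1,γ2) if and only if x < yz and y < xz. -/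
/-!
Write `γp = a γ₁ + b γ₂`. Since `γ₃ - γp` is orthogonal to `γ₁` and `γ₂`, the Gram system gives
`x = a + b z` and `y = a z + b`, hence `x - y z = a (1 - z²)` and `y - x z = b (1 - z²)`, where
`1 - z² > 0` by the strict Cauchy–Schwarz inequality. On the other hand, by linear independence,
a positive multiple of `a γ₁ + b γ₂` is cycle-consistent with `γ₁, γ₂` exactly when `a, b < 0`.
-/

noncomputable section

open scoped RealInnerProductSpace

section Gram

variable {E : Type*} [NormedAddCommGroup E] [InnerProductSpace ℝ E]

theorem sq_inner_lt_one_of_linearIndependent {u w : E} (hu : ‖u‖ = 1) (hw : ‖w‖ = 1)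
    (h : LinearIndependent ℝ ![u, w]) : ⟪u, w⟫ ^ 2 < 1 := by
  have hne : w - ⟪u, w⟫ • u ≠ 0 := by
    intro h0
    exact one_ne_zero (LinearIndependent.pair_iff.mp h (-⟪u, w⟫) 1 (by rw [← h0]; module)).2
  have huu : ⟪u, u⟫ = 1 := by rw [real_inner_self_eq_norm_sq, hu, one_pow]
  have hww : ⟪w, w⟫ = 1 := by rw [real_inner_self_eq_norm_sq, hw, one_pow]
  have hsq : ‖w - ⟪u, w⟫ • u‖ ^ 2 = 1 - ⟪u, w⟫ ^ 2 := by
    rw [← real_inner_self_eq_norm_sq]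
    simp only [inner_sub_left, inner_sub_right, real_inner_smul_left, real_inner_smul_right,
      huu, hww, real_inner_comm u w]
    ring
  linarith [pow_pos (norm_pos_iff.mpr hne) 2]

theorem inner_add_smul_sub_mul_inner {u w : E} (hu : ‖u‖ = 1) (hw : ‖w‖ = 1) (a b : ℝ) :
    ⟪a • u + b • w, u⟫ - ⟪a • u + b • w, w⟫ * ⟪u, w⟫ = a * (1 - ⟪u, w⟫ ^ 2) := by
  simp only [inner_add_left, real_inner_smul_left, real_inner_self_eq_norm_sq, hu, hw,
    real_inner_comm u w]
  ring

end Gram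

theorem cycleConsistent_smul_iff {γ₁ γ₂ v : V3} {c : ℝ} (hc : 0 < c) :
    CycleConsistent γ₁ γ₂ (c • v) ↔ CycleConsistent γ₁ γ₂ v := by
  constructor
  · rintro ⟨l₁, l₂, l₃, h₁, h₂, h₃, h⟩
    exact ⟨l₁, l₂, l₃ * c, h₁, h₂, mul_pos h₃ hc, by rw [← h, mul_smul]⟩
  · rintro ⟨l₁, l₂, l₃, h₁, h₂, h₃, h⟩
    refine ⟨l₁, l₂, l₃ / c, h₁, h₂, div_pos h₃ hc, ?_⟩
    rw [← h, smul_smul, div_mul_cancel₀ _ hc.ne']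

theorem inv_norm_smul_mem_consistencyRegion_iff {γ₁ γ₂ v : V3} (hv : v ≠ 0) :
    ‖v‖⁻¹ • v ∈ consistencyRegion γ₁ γ₂ ↔ CycleConsistent γ₁ γ₂ v := by
  rw [consistencyRegion, Set.mem_ofPred_eq, cycleConsistent_smul_iff (by positivity)]
  exact and_iff_right (norm_smul_inv_norm hv)

theorem cycleConsistent_add_smul_iff {γ₁ γ₂ : V3} (h : LinearIndependent ℝ ![γ₁, γ₂])
    {a b : ℝ} : CycleConsistent γ₁ γ₂ (a • γ₁ + b • γ₂) ↔ a < 0 ∧ b < 0 := by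
  constructor
  · rintro ⟨l₁, l₂, l₃, h₁, h₂, h₃, hsum⟩
    obtain ⟨ha, hb⟩ := LinearIndependent.pair_iff.mp h (l₁ + l₃ * a) (l₂ + l₃ * b)
      (by rw [← hsum]; module)
    constructor <;> nlinarith
  · rintro ⟨ha, hb⟩
    exact ⟨-a, -b, 1, neg_pos.mpr ha, neg_pos.mpr hb, one_pos, by module⟩

theorem stmt_3_general (γ₁ γ₂ γ₃ : V3) (h₁ : γ₁ ∈ unitSphere) (h₂ : γ₂ ∈ unitSphere)
    (hli : LinearIndependent ℝ ![γ₁, γ₂])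
    (x y z : ℝ) (hx : x = ⟪γ₁, γ₃⟫) (hy : y = ⟪γ₂, γ₃⟫) (hz : z = ⟪γ₁, γ₂⟫)
    (γp : V3) (hγp : γp = (Submodule.orthogonalProjection (Submodule.span ℝ {γ₁, γ₂}) γ₃ : V3))
    (hne : γp ≠ 0) :
    ‖γp‖⁻¹ • γp ∈ consistencyRegion γ₁ γ₂ ↔ x < y * z ∧ y < x * z := by
  have hγ₁ : γ₁ ∈ Submodule.span ℝ {γ₁, γ₂} := Submodule.subset_span (by simp)
  have hγ₂ : γ₂ ∈ Submodule.span ℝ {γ₁, γ₂} := Submodule.subset_span (by simp)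
  have hpx : ⟪γp, γ₁⟫ = x := by
    rw [hγp, hx, ← real_inner_comm γ₁ γ₃]
    exact Submodule.inner_orthogonalProjectionOnto_eq_of_mem_right ⟨γ₁, hγ₁⟩ γ₃
  have hpy : ⟪γp, γ₂⟫ = y := by
    rw [hγp, hy, ← real_inner_comm γ₂ γ₃]
    exact Submodule.inner_orthogonalProjectionOnto_eq_of_mem_right ⟨γ₂, hγ₂⟩ γ₃
  obtain ⟨a, b, rfl⟩ := Submodule.mem_span_pair.mp (hγp ▸ SetLike.coe_mem _ : γp ∈ _)
  have hgap : 0 < 1 - z ^ 2 := by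
    linarith [hz ▸ sq_inner_lt_one_of_linearIndependent h₁ h₂ hli]
  have hxa : x - y * z = a * (1 - z ^ 2) := by
    rw [← hpx, ← hpy, hz, inner_add_smul_sub_mul_inner h₁ h₂]
  have hyb : y - x * z = b * (1 - z ^ 2) := by
    rw [← hpx, ← hpy, hz, ← real_inner_comm γ₁ γ₂, add_comm (a • γ₁),
      inner_add_smul_sub_mul_inner h₂ h₁]
  have hscale (t : ℝ) : t * (1 - z ^ 2) < 0 ↔ t < 0 := by
    simpa using mul_lt_mul_iff_left₀ hgap (b := t) (c := 0)
  rw [inv_norm_smul_mem_consistencyRegion_iff hne, cycleConsistent_add_smul_iff hli,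
    ← sub_neg (a := x), ← sub_neg (a := y), hxa, hyb, hscale, hscale]

/-- For γ₁, γ₂, γ₃ ∈ S² with γ₁, γ₂ linearly independent, with
x = ⟨γ₁,γ₃⟩, y = ⟨γ₂,γ₃⟩, z = ⟨γ₁,γ₂⟩ and γp the orthogonal projection of γ₃ onto
span{γ₁,γ₂}: if γp ≠ 0 then γp/‖γp‖ ∈ Ω(γ₁,γ₂) ↔ (x < yz ∧ y < xz). -/
theorem stmt_3 (γ₁ γ₂ γ₃ : V3) (h₁ : γ₁ ∈ unitSphere) (h₂ : γ₂ ∈ unitSphere)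
    (h₃ : γ₃ ∈ unitSphere) (hli : LinearIndependent ℝ ![γ₁, γ₂])
    (x y z : ℝ) (hx : x = ⟪γ₁, γ₃⟫) (hy : y = ⟪γ₂, γ₃⟫) (hz : z = ⟪γ₁, γ₂⟫)
    (γp : V3) (hγp : γp = (Submodule.orthogonalProjection (Submodule.span ℝ {γ₁, γ₂}) γ₃ : V3))
    (hne : γp ≠ 0) :
    ‖γp‖⁻¹ • γp ∈ consistencyRegion γ₁ γ₂ ↔ x < y * z ∧ y < x * z :=
  stmt_3_general γ₁ γ₂ γ₃ h₁ h₂ hli x y z hx hy hz γp hγp hne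
end
end

section
/- Let γ1, γ2, γ3 ∈ S² with γ1, γ2 linearly independent, and set x = ⟨γ1,γ3⟩, y = ⟨γ2,γ3⟩, z = ⟨γ1,γ2⟩. If it is not the case that both x < yz and y < xz, then I_AAB(γ3; γ1, γ2) = arccos(−min(x,y)) = min(d_g(γ3, −γ1), d_g(γ3, −γ2)), i.e., the inconsistency is attained at the nearer of the two arc endpoints −γ1 and −γ2. -/
noncomputable section

open scoped RealInnerProductSpace

lemma key1 (a b x y z : ℝ) (ha : 0 < a) (hb : 0 < b) (hz1 : -1 ≤ z) (hz2 : z ≤ 1)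
    (hcon : a^2 + 2*(a*b)*z + b^2 = 1) (hyp : x*z ≤ y) : min x y ≤ a*x + b*y := by
  have hab1 : a + b*z ≤ 1 := by
    nlinarith [sq_nonneg (a + b*z - 1), sq_nonneg (a + b*z + 1), sq_nonneg b,
      mul_nonneg (mul_nonneg (sq_nonneg b) (by linarith : (0:ℝ) ≤ 1 - z)) (by linarith : (0:ℝ) ≤ 1 + z)]
  have hab2 : 1 ≤ a + b := by
    nlinarith [mul_pos ha hb, mul_nonneg (mul_pos ha hb).le (by linarith : (0:ℝ) ≤ 1 - z)]
  have hab3 : z ≤ a + b*z := by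
    rcases le_or_gt z 0 with hzs | hzs
    · rcases le_total b 1 with hb1 | hb1
      · nlinarith
      · nlinarith [sq_nonneg (a + b*z - z), sq_nonneg (a + b*z + z),
          mul_nonneg (mul_nonneg (by linarith : (0:ℝ) ≤ 1 - z) (by linarith : (0:ℝ) ≤ 1 + z))
            (by nlinarith : (0:ℝ) ≤ b^2 - 1)]
    · rcases le_total 1 b with hb1 | hb1
      · nlinarith
      · nlinarith [mul_nonneg (mul_nonneg (by linarith : (0:ℝ) ≤ 1 - z) (by linarith : (0:ℝ) ≤ 1 + z))
          (by nlinarith : (0:ℝ) ≤ 1 - b^2), sq_nonneg (a + b*z + z), sq_nonneg (a + b*z - z)]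
  rcases le_or_gt x 0 with hx0 | hx0
  · have h1 : min x y ≤ x := min_le_left _ _
    have h2 : x ≤ a*x + b*y := by
      nlinarith [mul_nonneg hb.le (by linarith : (0:ℝ) ≤ y - x*z),
        mul_nonneg (by linarith : (0:ℝ) ≤ -x) (by linarith : (0:ℝ) ≤ 1 - (a + b*z))]
    linarith
  rcases le_total x y with hxy | hxy
  · rw [min_eq_left hxy]
    nlinarith [mul_nonneg hb.le (by linarith : (0:ℝ) ≤ y - x)]
  · rw [min_eq_right hxy]
    rcases le_or_gt 0 y with hy0 | hy0
    · nlinarith [mul_nonneg ha.le (by linarith : (0:ℝ) ≤ x - y)]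
    · rcases le_total b 1 with hb1 | hb1
      · nlinarith [mul_nonneg (by linarith : (0:ℝ) ≤ -y) (by linarith : (0:ℝ) ≤ 1 - b),
          mul_nonneg ha.le hx0.le]
      · nlinarith [mul_nonneg (by linarith : (0:ℝ) ≤ b - 1) (by linarith : (0:ℝ) ≤ y - x*z),
          mul_nonneg hx0.le (by linarith : (0:ℝ) ≤ a + b*z - z)]

lemma arccos_anti {s t : ℝ} (h : s ≤ t) : Real.arccos t ≤ Real.arccos s := by
  rw [Real.arccos_eq_pi_div_two_sub_arcsin, Real.arccos_eq_pi_div_two_sub_arcsin]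
  have := Real.monotone_arcsin h
  linarith

lemma normsq_comb (γ₁ γ₂ : V3) (hn1 : ‖γ₁‖ = 1) (hn2 : ‖γ₂‖ = 1) (a b : ℝ) :
    ‖a • γ₁ + b • γ₂‖^2 = a^2 + 2*(a*b)*⟪γ₁, γ₂⟫ + b^2 := by
  have i11 : ⟪γ₁, γ₁⟫ = 1 := by
    rw [real_inner_self_eq_norm_sq, hn1]; norm_num
  have i22 : ⟪γ₂, γ₂⟫ = 1 := by
    rw [real_inner_self_eq_norm_sq, hn2]; norm_num
  have i21 : ⟪γ₂, γ₁⟫ = ⟪γ₁, γ₂⟫ := real_inner_comm _ _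
  rw [← real_inner_self_eq_norm_sq]
  simp only [inner_add_left, inner_add_right, real_inner_smul_left, real_inner_smul_right,
    i11, i22, i21]
  ring

lemma mem_region (γ₁ γ₂ : V3) (hn1 : ‖γ₁‖ = 1) (hn2 : ‖γ₂‖ = 1) (a b : ℝ)
    (ha : 0 < a) (hb : 0 < b) (hcon : a^2 + 2*(a*b)*⟪γ₁, γ₂⟫ + b^2 = 1) :
    -(a • γ₁ + b • γ₂) ∈ consistencyRegion γ₁ γ₂ := by
  constructor
  · show ‖-(a • γ₁ + b • γ₂)‖ = 1
    have h := normsq_comb γ₁ γ₂ hn1 hn2 a b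
    rw [hcon] at h
    rw [norm_neg, ← Real.sqrt_sq (norm_nonneg (a • γ₁ + b • γ₂)), h, Real.sqrt_one]
  · exact ⟨a, b, 1, ha, hb, one_pos, by simp only [one_smul]; abel⟩

lemma mem_region_iff (γ₁ γ₂ : V3) (hn1 : ‖γ₁‖ = 1) (hn2 : ‖γ₂‖ = 1) (γ : V3) :
    γ ∈ consistencyRegion γ₁ γ₂ ↔
      ∃ a b : ℝ, 0 < a ∧ 0 < b ∧ a^2 + 2*(a*b)*⟪γ₁, γ₂⟫ + b^2 = 1 ∧
        γ = -(a • γ₁ + b • γ₂) := by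
  constructor
  · rintro ⟨hγs, l₁, l₂, l₃, hl1, hl2, hl3, hsum⟩
    have h3 : (l₃ : ℝ) ≠ 0 := ne_of_gt hl3
    have h4 : l₃ • γ = -(l₁ • γ₁ + l₂ • γ₂) := eq_neg_of_add_eq_zero_right hsum
    have hγ : γ = -((l₁/l₃) • γ₁ + (l₂/l₃) • γ₂) := by
      have := congrArg (fun v => (l₃⁻¹ : ℝ) • v) h4
      simp only [smul_smul, inv_mul_cancel₀ h3, one_smul, smul_neg, smul_add] at this
      rw [this]
      rw [div_eq_inv_mul, div_eq_inv_mul]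
    refine ⟨l₁/l₃, l₂/l₃, div_pos hl1 hl3, div_pos hl2 hl3, ?_, hγ⟩
    have hnγ : ‖γ‖ = 1 := hγs
    have h := normsq_comb γ₁ γ₂ hn1 hn2 (l₁/l₃) (l₂/l₃)
    rw [← h]
    rw [hγ, norm_neg] at hnγ
    rw [hnγ]; norm_num
  · rintro ⟨a, b, ha, hb, hcon, rfl⟩
    exact mem_region γ₁ γ₂ hn1 hn2 a b ha hb hcon

lemma dg_neg_comb (γ₁ γ₂ γ₃ : V3) (a b : ℝ) :
    dg γ₃ (-(a • γ₁ + b • γ₂)) = Real.arccos (-(a*⟪γ₁, γ₃⟫ + b*⟪γ₂, γ₃⟫)) := by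
  unfold dg
  congr 1
  rw [inner_neg_right, inner_add_right, real_inner_smul_right, real_inner_smul_right,
    real_inner_comm γ₃ γ₁, real_inner_comm γ₃ γ₂]

lemma region_comm (γ₁ γ₂ : V3) : consistencyRegion γ₁ γ₂ = consistencyRegion γ₂ γ₁ := by
  ext γ
  constructor <;> rintro ⟨hγs, l₁, l₂, l₃, hl1, hl2, hl3, hsum⟩ <;>
    exact ⟨hγs, l₂, l₁, l₃, hl2, hl1, hl3, by rw [← hsum]; abel⟩

lemma exists_point (γ₁ γ₂ : V3) (hn1 : ‖γ₁‖ = 1) (hn2 : ‖γ₂‖ = 1) (b : ℝ)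
    (hb0 : 0 < b) (hb1 : b < 1) :
    -((Real.sqrt (1 - b^2*(1 - ⟪γ₁, γ₂⟫^2)) - b*⟪γ₁, γ₂⟫) • γ₁ + b • γ₂) ∈
      consistencyRegion γ₁ γ₂ := by
  set z := ⟪γ₁, γ₂⟫ with hzdef
  have hz : |z| ≤ 1 := by
    have := abs_real_inner_le_norm γ₁ γ₂
    rwa [hn1, hn2, one_mul] at this
  have hz2 : z^2 ≤ 1 := by
    rw [← sq_abs]; nlinarith [abs_nonneg z]
  have harg : 0 < 1 - b^2*(1 - z^2) := by nlinarith [sq_nonneg z]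
  set r := Real.sqrt (1 - b^2*(1 - z^2)) with hrdef
  have hr0 : 0 < r := Real.sqrt_pos.2 harg
  have hr2 : r^2 = 1 - b^2*(1 - z^2) := Real.sq_sqrt harg.le
  have ha : 0 < r - b*z := by
    rcases le_or_gt z 0 with hzs | hzs
    · nlinarith
    · nlinarith [sq_nonneg (r - b*z), sq_nonneg (r + b*z)]
  have hcon : (r - b*z)^2 + 2*((r - b*z)*b)*z + b^2 = 1 := by linear_combination hr2
  exact mem_region γ₁ γ₂ hn1 hn2 _ b ha hb0 hcon

lemma bdd_below_dg (γ₁ γ₂ γ₃ : V3) : BddBelow (dg γ₃ '' consistencyRegion γ₁ γ₂) := by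
  refine ⟨0, ?_⟩
  rintro w ⟨γ, _, rfl⟩
  exact Real.arccos_nonneg _

lemma upper_aux (γ₁ γ₂ γ₃ : V3) (hn1 : ‖γ₁‖ = 1) (hn2 : ‖γ₂‖ = 1) :
    sInf (dg γ₃ '' consistencyRegion γ₁ γ₂) ≤ Real.arccos (-⟪γ₁, γ₃⟫) := by
  set z := ⟪γ₁, γ₂⟫ with hzdef
  set X := ⟪γ₁, γ₃⟫ with hXdef
  set Y := ⟪γ₂, γ₃⟫ with hYdef
  set F : ℝ → ℝ := fun b =>
    Real.arccos (-((Real.sqrt (1 - b^2*(1 - z^2)) - b*z) * X + b * Y)) with hFdef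
  have hFc : Continuous F := by
    apply Real.continuous_arccos.comp
    apply Continuous.neg
    apply Continuous.add
    · exact ((Real.continuous_sqrt.comp (by continuity)).sub (by continuity)).mul continuous_const
    · exact continuous_id.mul continuous_const
  have hF0 : F 0 = Real.arccos (-X) := by
    simp [hFdef, Real.sqrt_one]
  have htend : Filter.Tendsto F (nhdsWithin 0 (Set.Ioi 0)) (nhds (Real.arccos (-X))) := by
    rw [← hF0]
    exact (hFc.tendsto 0).mono_left nhdsWithin_le_nhds
  refine ge_of_tendsto htend ?_
  have hmem : Set.Ioo (0:ℝ) 1 ∈ nhdsWithin 0 (Set.Ioi 0) :=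
    Ioo_mem_nhdsGT_of_mem (by norm_num : (0:ℝ) ∈ Set.Ico (0:ℝ) 1)
  filter_upwards [hmem] with b hb
  have hpt := exists_point γ₁ γ₂ hn1 hn2 b hb.1 hb.2
  refine csInf_le (bdd_below_dg γ₁ γ₂ γ₃) ⟨_, hpt, ?_⟩
  rw [dg_neg_comb]

/-- For γ₁, γ₂, γ₃ ∈ S² with γ₁, γ₂ linearly independent, with
x = ⟨γ₁,γ₃⟩, y = ⟨γ₂,γ₃⟩, z = ⟨γ₁,γ₂⟩: if not (x < yz and y < xz), then
I_AAB(γ₃; γ₁, γ₂) = arccos(−min(x,y)) = min(d_g(γ₃,−γ₁), d_g(γ₃,−γ₂)). -/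
theorem stmt_5 (γ₁ γ₂ γ₃ : V3) (h₁ : γ₁ ∈ unitSphere) (h₂ : γ₂ ∈ unitSphere)
    (h₃ : γ₃ ∈ unitSphere) (hli : LinearIndependent ℝ ![γ₁, γ₂])
    (x y z : ℝ) (hx : x = ⟪γ₁, γ₃⟫) (hy : y = ⟪γ₂, γ₃⟫) (hz : z = ⟪γ₁, γ₂⟫)
    (hnot : ¬(x < y * z ∧ y < x * z)) :
    IAAB γ₃ γ₁ γ₂ = Real.arccos (-(min x y)) ∧
      IAAB γ₃ γ₁ γ₂ = min (dg γ₃ (-γ₁)) (dg γ₃ (-γ₂)) := by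
  have hn1 : ‖γ₁‖ = 1 := h₁
  have hn2 : ‖γ₂‖ = 1 := h₂
  have hn3 : ‖γ₃‖ = 1 := h₃
  have hzb : |z| ≤ 1 := by
    rw [hz]
    have := abs_real_inner_le_norm γ₁ γ₂
    rwa [hn1, hn2, one_mul] at this
  have hz1 : -1 ≤ z := neg_le_of_abs_le hzb
  have hz2 : z ≤ 1 := le_of_abs_le hzb
  -- the hypothesis split
  have hyp : y*z ≤ x ∨ x*z ≤ y := by
    rcases not_and_or.mp hnot with h | h
    · exact Or.inl (not_lt.mp h)
    · exact Or.inr (not_lt.mp h)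
  -- key inequality for feasible coefficients
  have hkey : ∀ a b : ℝ, 0 < a → 0 < b → a^2 + 2*(a*b)*z + b^2 = 1 →
      min x y ≤ a*x + b*y := by
    intro a b ha hb hcon
    rcases hyp with h | h
    · have := key1 b a y x z hb ha hz1 hz2 (by linarith [hcon]; ) h
      rw [min_comm] at this
      linarith [this]
    · exact key1 a b x y z ha hb hz1 hz2 hcon h
  -- nonemptiness
  have hne : (dg γ₃ '' consistencyRegion γ₁ γ₂).Nonempty := by
    refine ⟨_, Set.mem_image_of_mem _ (exists_point γ₁ γ₂ hn1 hn2 (1/2) (by norm_num) (by norm_num))⟩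
  -- lower bound
  have hlow : Real.arccos (-(min x y)) ≤ IAAB γ₃ γ₁ γ₂ := by
    refine le_csInf hne ?_
    rintro w ⟨γ, hγ, rfl⟩
    obtain ⟨a, b, ha, hb, hcon, rfl⟩ := (mem_region_iff γ₁ γ₂ hn1 hn2 γ).mp hγ
    rw [dg_neg_comb, ← hx, ← hy]
    refine arccos_anti ?_
    have := hkey a b ha hb (by rw [hz]; exact hcon)
    linarith
  -- upper bounds
  have hupx : IAAB γ₃ γ₁ γ₂ ≤ Real.arccos (-x) := by
    rw [hx]; exact upper_aux γ₁ γ₂ γ₃ hn1 hn2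
  have hupy : IAAB γ₃ γ₁ γ₂ ≤ Real.arccos (-y) := by
    rw [hy]
    have := upper_aux γ₂ γ₁ γ₃ hn2 hn1
    rwa [← region_comm] at this
  -- arccos of min is min of arccos
  have hmineq : Real.arccos (-(min x y)) = min (Real.arccos (-x)) (Real.arccos (-y)) := by
    rcases le_total x y with h | h
    · rw [min_eq_left h, min_eq_left (arccos_anti (by linarith))]
    · rw [min_eq_right h, min_eq_right (arccos_anti (by linarith))]
  have hmain : IAAB γ₃ γ₁ γ₂ = Real.arccos (-(min x y)) := by
    refine le_antisymm ?_ hlow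
    rw [hmineq]
    exact le_min hupx hupy
  refine ⟨hmain, ?_⟩
  have hd1 : dg γ₃ (-γ₁) = Real.arccos (-x) := by
    unfold dg
    rw [inner_neg_right, hx, real_inner_comm]
  have hd2 : dg γ₃ (-γ₂) = Real.arccos (-y) := by
    unfold dg
    rw [inner_neg_right, hy, real_inner_comm]
  rw [hmain, hd1, hd2, hmineq]
end
end

section
/- Let u, ε ∈ S² and 0 ≤ σ < 1. Then u + σε ≠ 0 and the great-circle distance between u and the normalized noisy direction satisfies d_g(u, (u + σε)/‖u + σε‖) ≤ (π/2)·σ. -/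
noncomputable section

open scoped RealInnerProductSpace

set_option maxHeartbeats 1000000 in
/-- For u, ε ∈ S² and 0 ≤ σ < 1, u + σε ≠ 0 and
d_g(u, (u + σε)/‖u + σε‖) ≤ (π/2)σ. -/
theorem stmt_10 (u ε : V3) (hu : u ∈ unitSphere) (hε : ε ∈ unitSphere)
    (σ : ℝ) (hσ0 : 0 ≤ σ) (hσ1 : σ < 1) :
    u + σ • ε ≠ 0 ∧ dg u (‖u + σ • ε‖⁻¹ • (u + σ • ε)) ≤ Real.pi / 2 * σ := by
  have hu1 : ‖u‖ = 1 := hu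
  have hε1 : ‖ε‖ = 1 := hε
  set t : ℝ := ⟪u, ε⟫ with ht
  have htle : |t| ≤ 1 := by
    have := abs_real_inner_le_norm u ε
    rwa [hu1, hε1, one_mul] at this
  have ht1 : -1 ≤ t := neg_le_of_abs_le htle
  have ht2 : t ≤ 1 := le_of_abs_le htle
  set w : V3 := u + σ • ε with hw
  have hnormsq : ‖w‖ ^ 2 = 1 + 2 * σ * t + σ ^ 2 := by
    rw [hw, norm_add_sq_real, real_inner_smul_right, norm_smul, hu1, hε1,
      Real.norm_eq_abs, abs_of_nonneg hσ0]
    ring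
  have hiw : ⟪u, w⟫ = 1 + σ * t := by
    rw [hw, inner_add_right, real_inner_smul_right, real_inner_self_eq_norm_sq, hu1]
    ring
  have h1σt : 1 - σ ≤ 1 + σ * t := by nlinarith
  have hwsq_pos : (1 - σ) ^ 2 ≤ ‖w‖ ^ 2 := by nlinarith
  have hwpos : 0 < ‖w‖ := by nlinarith [norm_nonneg w, sq_nonneg (‖w‖ - (1 - σ))]
  have hwne : w ≠ 0 := by
    intro h
    rw [h, norm_zero] at hwpos
    exact lt_irrefl 0 hwpos
  refine ⟨hwne, ?_⟩
  set c : ℝ := ⟪u, (‖w‖⁻¹ • w : V3)⟫ with hc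
  have hcval : c = (1 + σ * t) / ‖w‖ := by
    rw [hc, real_inner_smul_right, hiw, div_eq_inv_mul]
  clear_value c
  have hc0 : 0 ≤ c := by
    rw [hcval]
    apply div_nonneg _ hwpos.le
    linarith
  have hc1 : c ≤ 1 := by
    rw [hcval, div_le_one hwpos]
    have hsq : (1 + σ * t) ^ 2 ≤ ‖w‖ ^ 2 := by
      nlinarith [mul_nonneg (sq_nonneg σ) (sub_nonneg.2 (by nlinarith : t ^ 2 ≤ 1))]
    nlinarith [hsq, hwpos, h1σt, hσ1]
  -- sin(arccos c) = √(1 - c²) ≤ σ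
  have hsin : Real.sin (Real.arccos c) = Real.sqrt (1 - c ^ 2) := Real.sin_arccos c
  have h1c2 : 1 - c ^ 2 = σ ^ 2 * (1 - t ^ 2) / ‖w‖ ^ 2 := by
    rw [hcval]
    field_simp
    nlinarith [hnormsq]
  have hsinle : Real.sqrt (1 - c ^ 2) ≤ σ := by
    rw [h1c2]
    have hle : σ ^ 2 * (1 - t ^ 2) / ‖w‖ ^ 2 ≤ σ ^ 2 := by
      rw [div_le_iff₀ (by positivity)]
      nlinarith [sq_nonneg (t + σ)]
    calc Real.sqrt (σ ^ 2 * (1 - t ^ 2) / ‖w‖ ^ 2) ≤ Real.sqrt (σ ^ 2) :=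
          Real.sqrt_le_sqrt hle
      _ = σ := Real.sqrt_sq hσ0
  -- arccos c ∈ [0, π/2], Jordan
  have harange : Real.arccos c ≤ Real.pi / 2 := Real.arccos_le_pi_div_two.2 hc0
  have ha0 : 0 ≤ Real.arccos c := Real.arccos_nonneg c
  have hjordan := Real.mul_le_sin ha0 harange
  have hπ : 0 < Real.pi := Real.pi_pos
  have : 2 / Real.pi * Real.arccos c ≤ σ := by
    calc 2 / Real.pi * Real.arccos c ≤ Real.sin (Real.arccos c) := hjordan
      _ = Real.sqrt (1 - c ^ 2) := hsin
      _ ≤ σ := hsinle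
  rw [div_mul_eq_mul_div, div_le_iff₀ hπ] at this
  have hdg : dg u (‖w‖⁻¹ • w) = Real.arccos c := by rw [dg, ← hc]
  rw [hdg]
  nlinarith
end
end

section
/- Lower bound via projection onto the orthogonal complement: for all γ1, γ2, γ3 ∈ S² with γ1, γ2 linearly independent, I_AAB(γ3; γ1, γ2) ≥ ‖P_{span{γ1,γ2}⊥}(γ3)‖, where P_{span{γ1,γ2}⊥} denotes the orthogonal projection of ℝ³ onto the orthogonal complement of span{γ1, γ2}. -/
noncomputable section

open scoped RealInnerProductSpace

/-!
Every γ in Ω(γ₁, γ₂) is a positive combination of γ₁ and γ₂, so it lies in the plane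
S = span{γ₁, γ₂}. Writing γ₃ = u + w with u ∈ S and w ∈ Sᗮ, we get
⟨γ₃, γ⟩ = ⟨u, γ⟩ ≤ ‖u‖ = √(1 - ‖w‖²) ≤ 1 - ‖w‖²/2 ≤ cos ‖w‖, hence d_g(γ₃, γ) ≥ ‖w‖.
The infimum is not the junk value `sInf ∅ = 0` because Ω contains the normalisation of
-(γ₁ + γ₂), which is nonzero by linear independence.
-/

namespace Real

lemma le_arccos_of_le_cos {a t : ℝ} (ha₀ : 0 ≤ a) (haπ : a ≤ π) (h : t ≤ cos a) :
    a ≤ arccos t :=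
  arccos_cos ha₀ haπ ▸ arccos_le_arccos h

lemma le_cos_of_sq_add_sq_eq_one {u x : ℝ} (h : u ^ 2 + x ^ 2 = 1) : u ≤ cos x := by
  have hu : u ≤ 1 - x ^ 2 / 2 := by nlinarith [sq_nonneg x, sq_nonneg (x ^ 2)]
  exact hu.trans one_sub_sq_div_two_le_cos

end Real

namespace Submodule

variable {E : Type*} [NormedAddCommGroup E] [InnerProductSpace ℝ E]
  (K : Submodule ℝ E) [K.HasOrthogonalProjection]

lemma real_inner_le_norm_orthogonalProjectionOnto_mul (v : E) {γ : E} (hγ : γ ∈ K) :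
    ⟪v, γ⟫ ≤ ‖K.orthogonalProjectionOnto v‖ * ‖γ‖ := by
  rw [← inner_orthogonalProjectionOnto_eq_of_mem_right (⟨γ, hγ⟩ : K) v]
  exact real_inner_le_norm _ _

lemma norm_orthogonalProjectionOnto_orthogonal_le_arccos_inner {v γ : E} (hv : ‖v‖ = 1)
    (hγ : γ ∈ K) (hγ₁ : ‖γ‖ = 1) :
    ‖Kᗮ.orthogonalProjectionOnto v‖ ≤ Real.arccos ⟪v, γ⟫ := by
  have hpyth := K.norm_sq_eq_add_norm_sq_projection v
  rw [hv, one_pow] at hpyth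
  have hle_one : ‖Kᗮ.orthogonalProjectionOnto v‖ ≤ 1 := by
    nlinarith [norm_nonneg (K.orthogonalProjectionOnto v),
      norm_nonneg (Kᗮ.orthogonalProjectionOnto v)]
  refine Real.le_arccos_of_le_cos (norm_nonneg _)
    (hle_one.trans (by linarith [Real.pi_gt_three])) ?_
  calc ⟪v, γ⟫ ≤ ‖K.orthogonalProjectionOnto v‖ := by
        simpa [hγ₁] using K.real_inner_le_norm_orthogonalProjectionOnto_mul v hγ
    _ ≤ Real.cos ‖Kᗮ.orthogonalProjectionOnto v‖ := Real.le_cos_of_sq_add_sq_eq_one hpyth.symm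

end Submodule

lemma CycleConsistent.mem_span {γ₁ γ₂ γ : V3} (h : CycleConsistent γ₁ γ₂ γ) :
    γ ∈ Submodule.span ℝ {γ₁, γ₂} := by
  obtain ⟨l₁, l₂, l₃, -, -, hl₃, hsum⟩ := h
  have hγ : γ = (-l₃⁻¹ * l₁) • γ₁ + (-l₃⁻¹ * l₂) • γ₂ := by
    rw [← sub_eq_zero, ← smul_right_inj hl₃.ne', smul_zero, ← hsum]
    match_scalars <;> field_simp
  rw [hγ]
  exact Submodule.add_mem _ (Submodule.smul_mem _ _ (Submodule.subset_span (by simp)))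
    (Submodule.smul_mem _ _ (Submodule.subset_span (by simp)))

lemma consistencyRegion_nonempty {γ₁ γ₂ : V3} (h : γ₁ + γ₂ ≠ 0) :
    (consistencyRegion γ₁ γ₂).Nonempty := by
  have hnorm : ‖γ₁ + γ₂‖ ≠ 0 := norm_ne_zero_iff.mpr h
  refine ⟨-(‖γ₁ + γ₂‖⁻¹ • (γ₁ + γ₂)), ?_, 1, 1, ‖γ₁ + γ₂‖, one_pos, one_pos, by positivity, ?_⟩
  · show ‖_‖ = 1
    rw [norm_neg, norm_smul, norm_inv, norm_norm, inv_mul_cancel₀ hnorm]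
  · rw [smul_neg, smul_smul, mul_inv_cancel₀ hnorm]
    module

theorem stmt_12_general (γ₁ γ₂ γ₃ : V3)
    (h₃ : γ₃ ∈ unitSphere) (hli : LinearIndependent ℝ ![γ₁, γ₂]) :
    IAAB γ₃ γ₁ γ₂ ≥ ‖(Submodule.orthogonalProjectionOnto (Submodule.span ℝ {γ₁, γ₂})ᗮ γ₃ : V3)‖ := by
  have hsum : γ₁ + γ₂ ≠ 0 := fun h ↦ by
    simpa using LinearIndependent.pair_iff.mp hli 1 1 (by simpa using h)
  refine le_csInf ((consistencyRegion_nonempty hsum).image _) ?_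
  rintro _ ⟨γ, ⟨hγ₁, hγ⟩, rfl⟩
  exact Submodule.norm_orthogonalProjectionOnto_orthogonal_le_arccos_inner _ h₃ hγ.mem_span hγ₁

/-- Lower bound via projection onto the orthogonal complement: for all
γ₁, γ₂, γ₃ ∈ S² with γ₁, γ₂ linearly independent,
I_AAB(γ₃; γ₁, γ₂) ≥ ‖P_{span{γ₁,γ₂}⊥}(γ₃)‖. -/
theorem stmt_12 (γ₁ γ₂ γ₃ : V3) (h₁ : γ₁ ∈ unitSphere) (h₂ : γ₂ ∈ unitSphere)
    (h₃ : γ₃ ∈ unitSphere) (hli : LinearIndependent ℝ ![γ₁, γ₂]) :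
    IAAB γ₃ γ₁ γ₂ ≥ ‖(Submodule.orthogonalProjectionOnto (Submodule.span ℝ {γ₁, γ₂})ᗮ γ₃ : V3)‖ :=
  stmt_12_general γ₁ γ₂ γ₃ h₃ hli
end
end

section
/- For any fixed γ, γ' ∈ S², the pushforward of the product measure μ ⊗ μ on S² × S² under the map (x, y) ↦ I_AAB(γ; x, y) equals the pushforward of μ ⊗ μ under (x, y) ↦ I_AAB(γ'; x, y); that is, when the two base directions are independent and uniformly distributed on S², the distribution of the AAB inconsistency does not depend on the third direction γ. -/
/-! The AAB inconsistency is invariant under a simultaneous rotation of its three arguments, since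
rotations preserve cycle-consistency and great-circle distance. Given unit vectors `γ, γ'`, a
rotation `L` with `L γ' = γ` is the reflection exchanging them followed by a reflection fixing `γ`.
As `μ ⊗ μ` is invariant under `L × L`, the law of `(x, y) ↦ I(γ; L x, L y) = I(γ'; x, y)` equals
that of `(x, y) ↦ I(γ; x, y)`. -/

noncomputable section

open scoped RealInnerProductSpace

open MeasureTheory

/-- μ is the uniform probability measure on S²: a probability measure on ℝ³ concentrated on
the unit sphere and invariant under every rotation in SO(3). (These properties characterize
the normalized surface-area measure on S² uniquely.) -/
def IsUniformSphereMeasure (μ : Measure V3) : Prop :=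
  IsProbabilityMeasure μ ∧ μ (unitSphereᶜ) = 0 ∧
    ∀ R : Matrix (Fin 3) (Fin 3) ℝ, R ∈ Matrix.specialOrthogonalGroup (Fin 3) ℝ →
      Measure.map (fun v : V3 => (WithLp.toLp 2 (R.mulVec v) : V3)) μ = μ

open Module

section Rotation

variable {E : Type*} [NormedAddCommGroup E] [InnerProductSpace ℝ E] [FiniteDimensional ℝ E]

theorem Submodule.det_reflection_orthogonal_span_singleton {w : E} (hw : w ≠ 0) :
    LinearMap.det ((ℝ ∙ w)ᗮ.reflection.toLinearEquiv : E →ₗ[ℝ] E) = -1 := by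
  rw [Submodule.det_reflection, Submodule.orthogonal_orthogonal, finrank_span_singleton hw,
    pow_one]

theorem exists_ne_zero_inner_eq_zero (hE : 2 ≤ finrank ℝ E) (v : E) : ∃ z ≠ 0, ⟪z, v⟫ = 0 := by
  have hspan : finrank ℝ (ℝ ∙ v) ≤ 1 := (finrank_span_le_card {v}).trans (by simp)
  have hperp : (ℝ ∙ v)ᗮ ≠ ⊥ := by
    intro hbot
    have hsum := (ℝ ∙ v).finrank_add_finrank_orthogonal
    rw [hbot, finrank_bot] at hsum
    omega
  obtain ⟨z, hz, hz0⟩ := Submodule.exists_mem_ne_zero_of_ne_bot hperp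
  exact ⟨z, hz0, Submodule.mem_orthogonal_singleton_iff_inner_left.mp hz⟩

theorem exists_linearIsometryEquiv_det_eq_one_apply_eq (hE : 2 ≤ finrank ℝ E) {u v : E}
    (h : ‖u‖ = ‖v‖) :
    ∃ L : E ≃ₗᵢ[ℝ] E, LinearMap.det (L.toLinearEquiv : E →ₗ[ℝ] E) = 1 ∧ L u = v := by
  by_cases huv : u = v
  · exact ⟨LinearIsometryEquiv.refl ℝ E, LinearMap.det_id, huv⟩
  obtain ⟨z, hz0, hzv⟩ := exists_ne_zero_inner_eq_zero hE v
  refine ⟨(ℝ ∙ (u - v))ᗮ.reflection.trans (ℝ ∙ z)ᗮ.reflection, ?_, ?_⟩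
  · rw [LinearIsometryEquiv.toLinearEquiv_trans, LinearEquiv.coe_trans, LinearMap.det_comp,
      Submodule.det_reflection_orthogonal_span_singleton hz0,
      Submodule.det_reflection_orthogonal_span_singleton (sub_ne_zero.mpr huv)]
    norm_num
  · rw [LinearIsometryEquiv.trans_apply, Submodule.reflection_sub h]
    exact Submodule.reflection_mem_subspace_eq_self
      (Submodule.mem_orthogonal_singleton_iff_inner_right.mpr hzv)

end Rotation

section Matrix

variable {ι : Type*} [Fintype ι] [DecidableEq ι]

theorem LinearMap.toLp_toMatrix_mulVec (f : EuclideanSpace ℝ ι →ₗ[ℝ] EuclideanSpace ℝ ι)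
    (v : EuclideanSpace ℝ ι) :
    WithLp.toLp 2 ((LinearMap.toMatrix (EuclideanSpace.basisFun ι ℝ).toBasis
      (EuclideanSpace.basisFun ι ℝ).toBasis f).mulVec (WithLp.ofLp v)) = f v := by
  rw [← Matrix.toLpLin_apply, ← Matrix.toEuclideanLin, Matrix.toEuclideanLin_eq_toLin_orthonormal,
    Matrix.toLin_toMatrix]

theorem LinearIsometryEquiv.toMatrix_mem_specialOrthogonalGroup
    (L : EuclideanSpace ℝ ι ≃ₗᵢ[ℝ] EuclideanSpace ℝ ι)
    (hL : LinearMap.det (L.toLinearEquiv : EuclideanSpace ℝ ι →ₗ[ℝ] EuclideanSpace ℝ ι) = 1) :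
    LinearMap.toMatrix (EuclideanSpace.basisFun ι ℝ).toBasis (EuclideanSpace.basisFun ι ℝ).toBasis
      (L.toLinearEquiv : EuclideanSpace ℝ ι →ₗ[ℝ] EuclideanSpace ℝ ι) ∈
      Matrix.specialOrthogonalGroup ι ℝ :=
  Matrix.mem_specialOrthogonalGroup_iff.mpr
    ⟨L.toMatrix_mem_unitaryGroup _ _, by rwa [LinearMap.det_toMatrix]⟩

end Matrix

theorem IsUniformSphereMeasure.measurePreserving {μ : Measure V3} (hμ : IsUniformSphereMeasure μ)
    (L : V3 ≃ₗᵢ[ℝ] V3) (hL : LinearMap.det (L.toLinearEquiv : V3 →ₗ[ℝ] V3) = 1) :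
    MeasurePreserving L μ μ := by
  refine ⟨L.continuous.measurable, ?_⟩
  have h := hμ.2.2 _ (L.toMatrix_mem_specialOrthogonalGroup hL)
  simp only [LinearMap.toLp_toMatrix_mulVec] at h
  exact h

/-- No measurability of `g` is needed: when `g` is not a.e.-measurable, the embedding makes both
pushforwards the junk value `0`. -/
theorem MeasureTheory.MeasurePreserving.map_comp_of_measurableEmbedding {α β γ : Type*}
    [MeasurableSpace α] [MeasurableSpace β] [MeasurableSpace γ] {μa : Measure α} {μb : Measure β}
    {f : α → β} (hf : MeasurePreserving f μa μb) (hfe : MeasurableEmbedding f) (g : β → γ) :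
    μa.map (g ∘ f) = μb.map g := by
  rw [← hf.map_eq]
  by_cases hg : AEMeasurable g (μa.map f)
  · exact (hg.map_map_of_aemeasurable hf.aemeasurable).symm
  · rw [Measure.map_of_not_aemeasurable hg,
      Measure.map_of_not_aemeasurable (hfe.aemeasurable_map_iff.not.mp hg)]

section Invariance

variable (L : V3 ≃ₗᵢ[ℝ] V3)

theorem cycleConsistent_map_iff (a b c : V3) :
    CycleConsistent (L a) (L b) (L c) ↔ CycleConsistent a b c := by
  simp only [CycleConsistent, ← L.map_smul, ← map_add, map_eq_zero_iff L L.injective]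

theorem consistencyRegion_map (a b : V3) :
    consistencyRegion (L a) (L b) = L '' consistencyRegion a b := by
  ext z
  obtain ⟨w, rfl⟩ := L.surjective z
  rw [L.injective.mem_set_image]
  simp only [consistencyRegion, unitSphere, Set.mem_ofPred_eq, L.norm_map, cycleConsistent_map_iff]

theorem dg_map (u v : V3) : dg (L u) (L v) = dg u v := by
  rw [dg, dg, L.inner_map_map]

theorem IAAB_map (a x y : V3) : IAAB (L a) (L x) (L y) = IAAB a x y := by
  rw [IAAB, IAAB, consistencyRegion_map, ← Set.image_comp]
  simp only [Function.comp_def, dg_map]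

end Invariance

/-- For any fixed γ, γ' ∈ S², the pushforward of μ ⊗ μ under
(x,y) ↦ I_AAB(γ; x, y) equals the pushforward of μ ⊗ μ under (x,y) ↦ I_AAB(γ'; x, y):
with independent uniform base directions, the distribution of the AAB inconsistency does
not depend on the third direction. -/
theorem stmt_17 (μ : Measure V3) (hμ : IsUniformSphereMeasure μ)
    (γ γ' : V3) (hγ : γ ∈ unitSphere) (hγ' : γ' ∈ unitSphere) :
    Measure.map (fun p : V3 × V3 => IAAB γ p.1 p.2) (μ.prod μ) =
      Measure.map (fun p : V3 × V3 => IAAB γ' p.1 p.2) (μ.prod μ) := by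
  have : IsProbabilityMeasure μ := hμ.1
  obtain ⟨L, hdet, hLγ⟩ :=
    exists_linearIsometryEquiv_det_eq_one_apply_eq (by simp) (hγ'.trans hγ.symm)
  have hL := hμ.measurePreserving L hdet
  have hLe : MeasurableEmbedding L := L.toHomeomorph.measurableEmbedding
  rw [← (hL.prod hL).map_comp_of_measurableEmbedding (hLe.prodMap hLe)]
  congr 1
  funext p
  simp only [Function.comp_apply, Prod.map_fst, Prod.map_snd, ← hLγ, IAAB_map]
end
end
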